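/- Let V be a d×d positive definite matrix with smallest eigenvalue at least k, and for t = 1,…,n let X_t be d×m_t matrices with m_t ≤ k and each column of X_t having Euclidean norm at most 1. Define V_0 = V and V_t = V_{t-1} + X_t X_tᵀ. Then Σ_{t=1}^n tr(X_tᵀ V_{t-1}⁻¹ X_t) ≤ 2·log(det(V_n)) − 2·log(det(V)). -/

import Mathlib

/-!
Write `M_t = X_tᵀ V_{t-1}⁻¹ X_t`. By the matrix determinant lemma
`det V_t = det V_{t-1} · det (1 + M_t)`, and since `M_t` is positive semidefinite,
`det (1 + M_t) = ∏ (1 + λ_i) ≥ 1 + tr M_t`. As `V_{t-1} ≥ V ≥ k` in the Loewner order, every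
diagonal entry of `M_t` is at most `1 / k`, so `tr M_t ≤ m_t / k ≤ 1`, and then
`tr M_t ≤ 2 log (1 + tr M_t) ≤ 2 log det V_t - 2 log det V_{t-1}`. Summing telescopes.
-/

open Matrix Finset
open scoped MatrixOrder

theorem Finset.one_add_sum_le_prod_one_add {ι R : Type*} [CommSemiring R] [PartialOrder R]
    [IsOrderedRing R] (s : Finset ι) {f : ι → R}
    (hf : ∀ i ∈ s, 0 ≤ f i) : 1 + ∑ i ∈ s, f i ≤ ∏ i ∈ s, (1 + f i) := by
  induction s using Finset.cons_induction with
  | empty => simp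
  | cons a s ha ih =>
    have hfa : 0 ≤ f a := hf a (mem_cons_self a s)
    have hs : ∀ i ∈ s, 0 ≤ f i := fun i hi => hf i (mem_cons_of_mem hi)
    calc 1 + ∑ i ∈ cons a s ha, f i
        ≤ 1 + f a + ∑ i ∈ s, f i + f a * ∑ i ∈ s, f i := by
          rw [sum_cons, ← add_assoc]
          exact le_add_of_nonneg_right (mul_nonneg hfa (sum_nonneg hs))
      _ = (1 + f a) * (1 + ∑ i ∈ s, f i) := by ring
      _ ≤ ∏ i ∈ cons a s ha, (1 + f i) := by
          rw [prod_cons]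
          exact mul_le_mul_of_nonneg_left (ih hs) (add_nonneg zero_le_one hfa)

theorem Real.le_two_mul_log_one_add {y : ℝ} (h0 : 0 ≤ y) (h2 : y ≤ 2) :
    y ≤ 2 * Real.log (1 + y) := by
  have h := Real.le_log_one_add_of_nonneg h0
  have : y / 2 ≤ y / (y + 2) * 2 := by
    rw [div_mul_eq_mul_div, div_le_div_iff₀ two_pos (by linarith)]
    nlinarith
  rw [mul_div_assoc] at h
  linarith

namespace Matrix

theorem PosDef.of_le {n : Type*} {A B : Matrix n n ℝ} (hA : A.PosDef) (hAB : A ≤ B) :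
    B.PosDef := by
  simpa using hA.add_posSemidef hAB

theorem diag_transpose_mul_mul {n p : Type*} [Fintype n] (X : Matrix n p ℝ)
    (B : Matrix n n ℝ) (i : p) : (Xᵀ * B * X).diag i = Xᵀ i ⬝ᵥ (B *ᵥ Xᵀ i) := by
  rw [dotProduct_mulVec]
  rfl

theorem monotone_of_add_mul_transpose {n : Type*} [Fintype n] {ι : ℕ → Type*}
    [∀ t, Fintype (ι t)] {W : ℕ → Matrix n n ℝ} (X : ∀ t, Matrix n (ι t) ℝ)
    (hW : ∀ t, W (t + 1) = W t + X t * (X t)ᵀ) : Monotone W := by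
  refine monotone_nat_of_le_succ fun t => ?_
  rw [hW t]
  simpa [le_iff] using posSemidef_self_mul_conjTranspose (X t)

variable {n p : Type*} [Fintype n] [DecidableEq n]

theorem IsHermitian.det_one_add {A : Matrix n n ℝ} (hA : A.IsHermitian) :
    (1 + A).det = ∏ i, (1 + hA.eigenvalues i) := by
  have h : cfc (fun x : ℝ => 1 + x) A = 1 + A := by
    rw [cfc_const_add (1 : ℝ) (fun x => x) A, cfc_id' ℝ A, map_one]
  rw [← h, hA.cfc_eq]
  simp [IsHermitian.cfc, -Unitary.conjStarAlgAut_apply]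

theorem PosSemidef.one_add_trace_le_det_one_add {A : Matrix n n ℝ} (hA : A.PosSemidef) :
    1 + A.trace ≤ (1 + A).det := by
  rw [hA.isHermitian.det_one_add, hA.isHermitian.trace_eq_sum_eigenvalues]
  exact one_add_sum_le_prod_one_add _ fun i _ => hA.eigenvalues_nonneg i

theorem IsHermitian.algebraMap_le_of_le_eigenvalues {A : Matrix n n ℝ} (hA : A.IsHermitian)
    {k : ℝ} (hk : ∀ i, k ≤ hA.eigenvalues i) : algebraMap ℝ _ k ≤ A := by
  rw [algebraMap_le_iff_le_spectrum (a := A) hA.isSelfAdjoint,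
    hA.spectrum_real_eq_range_eigenvalues]
  rintro _ ⟨i, rfl⟩
  exact hk i

theorem posDef_of_algebraMap_le {A : Matrix n n ℝ} {k : ℝ} (hk : 0 < k)
    (hkA : algebraMap ℝ _ k ≤ A) : A.PosDef := by
  refine PosDef.of_le ?_ hkA
  rw [Algebra.algebraMap_eq_smul_one]
  exact PosDef.one.smul hk

theorem le_dotProduct_mulVec_of_algebraMap_le {A : Matrix n n ℝ} {k : ℝ}
    (hkA : algebraMap ℝ _ k ≤ A) (x : n → ℝ) : k * (x ⬝ᵥ x) ≤ x ⬝ᵥ (A *ᵥ x) := by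
  have h := hkA.dotProduct_mulVec_nonneg x
  simp only [star_trivial, sub_mulVec, dotProduct_sub, Algebra.algebraMap_eq_smul_one,
    smul_mulVec, one_mulVec, dotProduct_smul, smul_eq_mul] at h
  linarith

theorem dotProduct_inv_mulVec_le {A : Matrix n n ℝ} {k : ℝ} (hk : 0 < k)
    (hkA : algebraMap ℝ _ k ≤ A) (x : n → ℝ) : x ⬝ᵥ (A⁻¹ *ᵥ x) ≤ (x ⬝ᵥ x) / k := by
  have hA := posDef_of_algebraMap_le hk hkA
  set y := A⁻¹ *ᵥ x
  have hAy : A *ᵥ y = x := by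
    rw [mulVec_mulVec, mul_nonsing_inv _ ((isUnit_iff_isUnit_det A).mp hA.isUnit), one_mulVec]
  have hlow : k * (y ⬝ᵥ y) ≤ x ⬝ᵥ y := by
    simpa [hAy, dotProduct_comm] using le_dotProduct_mulVec_of_algebraMap_le hkA y
  -- `0 ≤ ‖x - k y‖²` together with `hlow` gives `k ⟪x, y⟫ ≤ ‖x‖²`.
  have hsq : 0 ≤ (x - k • y) ⬝ᵥ (x - k • y) := dotProduct_self_star_nonneg _
  simp only [sub_dotProduct, dotProduct_sub, smul_dotProduct, dotProduct_smul, smul_eq_mul,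
    dotProduct_comm y x] at hsq
  rw [le_div_iff₀ hk]
  linarith [mul_le_mul_of_nonneg_left hlow hk.le]

variable [Fintype p]

theorem trace_transpose_mul_inv_mul_le_one {A : Matrix n n ℝ} {k : ℝ}
    (hkA : algebraMap ℝ _ k ≤ A) (hp : (Fintype.card p : ℝ) ≤ k) (X : Matrix n p ℝ)
    (hX : ∀ i, ∑ j, X j i ^ 2 ≤ 1) : (Xᵀ * A⁻¹ * X).trace ≤ 1 := by
  rcases isEmpty_or_nonempty p with hp0 | hp0
  · simp [trace]
  have hk : 0 < k := lt_of_lt_of_le (by exact_mod_cast Fintype.card_pos) hp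
  calc (Xᵀ * A⁻¹ * X).trace = ∑ i, Xᵀ i ⬝ᵥ (A⁻¹ *ᵥ Xᵀ i) := by
        simp only [trace, diag_transpose_mul_mul]
    _ ≤ ∑ _i : p, 1 / k := sum_le_sum fun i _ =>
        (dotProduct_inv_mulVec_le hk hkA _).trans (by gcongr; simpa [dotProduct, sq] using hX i)
    _ = Fintype.card p / k := by simp [div_eq_mul_inv]
    _ ≤ 1 := div_le_one_of_le₀ hp hk.le

theorem trace_le_two_mul_log_det_add_mul_transpose [DecidableEq p] {A : Matrix n n ℝ}
    (hA : A.PosDef) (X : Matrix n p ℝ) (h2 : (Xᵀ * A⁻¹ * X).trace ≤ 2) :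
    (Xᵀ * A⁻¹ * X).trace ≤ 2 * Real.log (A + X * Xᵀ).det - 2 * Real.log A.det := by
  set M := Xᵀ * A⁻¹ * X
  have hM : M.PosSemidef := by simpa using hA.inv.posSemidef.conjTranspose_mul_mul_same X
  have htr : 0 ≤ M.trace := hM.trace_nonneg
  have hdet : 1 + M.trace ≤ (1 + M).det := hM.one_add_trace_le_det_one_add
  rw [det_add_mul X Xᵀ ((isUnit_iff_isUnit_det A).mp hA.isUnit),
    Real.log_mul hA.det_pos.ne' (by linarith)]
  calc M.trace ≤ 2 * Real.log (1 + M.trace) := Real.le_two_mul_log_one_add htr h2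
    _ ≤ 2 * Real.log (1 + M).det := by gcongr
    _ = 2 * (Real.log A.det + Real.log (1 + M).det) - 2 * Real.log A.det := by ring

end Matrix

theorem stmt13 (d n : ℕ) (k : ℝ) (V : Matrix (Fin d) (Fin d) ℝ) (hV : V.PosDef)
    (hk : ∀ i, k ≤ hV.1.eigenvalues i)
    (m : ℕ → ℕ) (hm : ∀ t, (m t : ℝ) ≤ k)
    (X : (t : ℕ) → Matrix (Fin d) (Fin (m t)) ℝ)
    (hX : ∀ t (i : Fin (m t)), ∑ j, (X t j i) ^ 2 ≤ 1)
    (W : ℕ → Matrix (Fin d) (Fin d) ℝ)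
    (hW0 : W 0 = V)
    (hW : ∀ t, W (t + 1) = W t + X t * (X t)ᵀ) :
    ∑ t ∈ Finset.range n, ((X t)ᵀ * (W t)⁻¹ * X t).trace ≤
      2 * Real.log (W n).det - 2 * Real.log V.det := by
  have hVW : ∀ t, V ≤ W t := fun t => hW0 ▸ monotone_of_add_mul_transpose X hW t.zero_le
  have hstep : ∀ t, ((X t)ᵀ * (W t)⁻¹ * X t).trace ≤
      2 * Real.log (W (t + 1)).det - 2 * Real.log (W t).det := fun t => by
    have hkW := (hV.1.algebraMap_le_of_le_eigenvalues hk).trans (hVW t)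
    have htr := trace_transpose_mul_inv_mul_le_one hkW (by simpa using hm t) (X t) (hX t)
    rw [hW t]
    exact trace_le_two_mul_log_det_add_mul_transpose (hV.of_le (hVW t)) (X t)
      (htr.trans one_le_two)
  calc ∑ t ∈ Finset.range n, ((X t)ᵀ * (W t)⁻¹ * X t).trace
      ≤ ∑ t ∈ Finset.range n, (2 * Real.log (W (t + 1)).det - 2 * Real.log (W t).det) :=
        sum_le_sum fun t _ => hstep t
    _ = 2 * Real.log (W n).det - 2 * Real.log V.det := by
        rw [sum_range_sub (fun t => 2 * Real.log (W t).det), hW0]
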